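/- For any normal element a of a unital C*-algebra A and any k ≥ 1, Δ_k(a) ≤ 2‖q_k‖_∞^{1/k} · min_{λ∈ℂ} ‖a − λ·1‖, where q_k(x) = x(1−x)^k + x^k(1−x) and Δ_k(a) = max_{ω∈S(A)} ω(|a − ω(a)|^k)^{1/k}. -/

import Mathlib

open scoped ComplexOrder

/-- A state of a unital C*-algebra: a unital positive linear functional. -/
def IsState {B : Type*} [CStarAlgebra B] (φ : B →ₗ[ℂ] ℂ) : Prop :=
  φ 1 = 1 ∧ ∀ b : B, 0 ≤ φ (star b * b)

/-- The absolute value `|b| = (b* b)^(1/2)` in a C*-algebra. -/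
noncomputable def cstarAbs {B : Type*} [CStarAlgebra B] [PartialOrder B]
    [StarOrderedRing B] (b : B) : B := CFC.sqrt (star b * b)

section StateLemmas
variable {B : Type*} [CStarAlgebra B] [PartialOrder B] [StarOrderedRing B]
variable {φ : B →ₗ[ℂ] ℂ}

lemma state_nonneg (hφ : IsState φ) {x : B} (hx : 0 ≤ x) : 0 ≤ φ x := by
  have h := hφ.2 (CFC.sqrt x)
  rwa [(IsSelfAdjoint.of_nonneg (CFC.sqrt_nonneg (a := x))).star_eq,
    CFC.sqrt_mul_sqrt_self x hx] at h

lemma state_algebraMap (hφ : IsState φ) (r : ℝ) : φ (algebraMap ℝ B r) = (r : ℂ) := by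
  rw [IsScalarTower.algebraMap_apply ℝ ℂ B, Algebra.algebraMap_eq_smul_one, map_smul, hφ.1,
    smul_eq_mul, mul_one]
  simp

lemma state_im_eq_zero (hφ : IsState φ) {x : B} (hx : IsSelfAdjoint x) : (φ x).im = 0 := by
  have h1 : (0:B) ≤ x + algebraMap ℝ B ‖x‖ := by
    have h := IsSelfAdjoint.le_algebraMap_norm_self (hx.neg)
    rw [norm_neg, neg_le_iff_add_nonneg] at h
    rwa [add_comm] at h
  have h2 := state_nonneg hφ h1
  rw [Complex.nonneg_iff] at h2
  have h3 : φ (x + algebraMap ℝ B ‖x‖) = φ x + (‖x‖ : ℂ) := by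
    rw [map_add, state_algebraMap hφ]
  rw [h3] at h2
  simpa using h2.2.symm

lemma state_star (hφ : IsState φ) (y : B) : φ (star y) = (starRingEnd ℂ) (φ y) := by
  set x : B := (2⁻¹ : ℂ) • (y + star y) with hxdef
  set w : B := (-Complex.I/2) • (y - star y) with hwdef
  have hx : IsSelfAdjoint x := by
    simp only [hxdef, IsSelfAdjoint, star_smul, star_add, star_star]
    rw [add_comm]
    congr 1
    norm_num
  have hw : IsSelfAdjoint w := by
    simp only [hwdef, IsSelfAdjoint, star_smul, star_sub, star_star]
    rw [← neg_sub y (star y), smul_neg, ← neg_smul]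
    congr 1
    norm_num [Complex.ext_iff]
  have hIw : Complex.I • w = (2⁻¹ : ℂ) • (y - star y) := by
    rw [hwdef, smul_smul]
    congr 1
    norm_num [Complex.ext_iff]
  have hy : y = x + Complex.I • w := by
    rw [hxdef, hIw]; module
  have hsy : star y = x - Complex.I • w := by
    rw [hxdef, hIw]; module
  have h1 := state_im_eq_zero hφ hx
  have h2 := state_im_eq_zero hφ hw
  have e1 : φ y = φ x + Complex.I * φ w := by
    conv_lhs => rw [hy]
    simp
  have e2 : φ (star y) = φ x - Complex.I * φ w := by
    conv_lhs => rw [hsy]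
    simp
  rw [e1, e2]
  simp [Complex.ext_iff, h1, h2]

lemma state_re_le_norm (hφ : IsState φ) {x : B} (hx : 0 ≤ x) : (φ x).re ≤ ‖x‖ := by
  have h1 : x ≤ algebraMap ℝ B ‖x‖ :=
    IsSelfAdjoint.le_algebraMap_norm_self (IsSelfAdjoint.of_nonneg hx)
  have h2 := state_nonneg hφ (sub_nonneg.2 h1)
  rw [map_sub, state_algebraMap hφ, Complex.nonneg_iff] at h2
  have := h2.1
  simp at this
  linarith

lemma state_norm_le (hφ : IsState φ) (b : B) : ‖φ b‖ ≤ ‖b‖ := by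
  have key := state_nonneg hφ (star_mul_self_nonneg (φ b • 1 - b))
  have expand : star (φ b • (1:B) - b) * (φ b • (1:B) - b)
      = ((starRingEnd ℂ) (φ b) * φ b) • (1:B) - (starRingEnd ℂ) (φ b) • b
        - φ b • star b + star b * b := by
    simp only [star_sub, star_smul, star_one, sub_mul, mul_sub, smul_mul_assoc, mul_smul_comm,
      smul_smul, smul_add, smul_sub, one_mul, mul_one, RCLike.star_def]
    module
  rw [expand] at key
  have heval : φ (((starRingEnd ℂ) (φ b) * φ b) • (1:B) - (starRingEnd ℂ) (φ b) • b
        - φ b • star b + star b * b)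
      = φ (star b * b) - (‖φ b‖^2 : ℝ) := by
    rw [map_add, map_sub, map_sub, map_smul, map_smul, map_smul, hφ.1, state_star hφ]
    rw [smul_eq_mul, smul_eq_mul, smul_eq_mul, mul_one]
    rw [mul_comm (φ b) ((starRingEnd ℂ) (φ b)), Complex.conj_mul']
    push_cast
    ring
  rw [heval, Complex.nonneg_iff] at key
  have h1 : ‖φ b‖^2 ≤ (φ (star b * b)).re := by
    have := key.1
    rwa [Complex.sub_re, Complex.ofReal_re, sub_nonneg] at this
  have h2 : (φ (star b * b)).re ≤ ‖b‖^2 := by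
    have := state_re_le_norm hφ (star_mul_self_nonneg b)
    rwa [CStarRing.norm_star_mul_self, ← sq] at this
  nlinarith [norm_nonneg (φ b), norm_nonneg b]

end StateLemmas

section CfcLemmas
variable {A : Type*} [CStarAlgebra A] [PartialOrder A] [StarOrderedRing A]

lemma cfc_realval_nonneg {a : A} (ha : IsStarNormal a) (g : ℂ → ℝ)
    (hg : ContinuousOn g (spectrum ℂ a)) (h : ∀ z ∈ spectrum ℂ a, 0 ≤ g z) :
    0 ≤ cfc (fun z => ((g z : ℝ) : ℂ)) a := by
  have hc : ContinuousOn (fun z => ((Real.sqrt (g z) : ℝ) : ℂ)) (spectrum ℂ a) :=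
    Complex.continuous_ofReal.comp_continuousOn (Real.continuous_sqrt.comp_continuousOn hg)
  have h1 : star (cfc (fun z => ((Real.sqrt (g z) : ℝ) : ℂ)) a)
      * cfc (fun z => ((Real.sqrt (g z) : ℝ) : ℂ)) a = cfc (fun z => ((g z : ℝ) : ℂ)) a := by
    rw [← cfc_star (fun z => ((Real.sqrt (g z) : ℝ) : ℂ)) a, ← cfc_mul _ _ a hc.star hc]
    apply cfc_congr
    intro z hz
    simp only [Complex.star_def, Complex.conj_ofReal, ← Complex.ofReal_mul,
      Real.mul_self_sqrt (h z hz)]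
  rw [← h1]
  exact star_mul_self_nonneg _

lemma cstarAbs_cfc {a : A} (ha : IsStarNormal a) (m₀ : ℂ) :
    cstarAbs (a - m₀ • 1) = cfc (fun z => ((‖z - m₀‖ : ℝ) : ℂ)) a := by
  have hc : ContinuousOn (fun z : ℂ => ((‖z - m₀‖ : ℝ) : ℂ)) (spectrum ℂ a) := by fun_prop
  have hb : a - m₀ • (1:A) = cfc (fun z : ℂ => z - m₀) a := by
    rw [cfc_sub _ _ a, cfc_id' ℂ a, cfc_const m₀ a, Algebra.algebraMap_eq_smul_one]
  have hy : (0:A) ≤ cfc (fun z => ((‖z - m₀‖ : ℝ) : ℂ)) a :=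
    cfc_realval_nonneg ha _ (by fun_prop) (fun z _ => norm_nonneg _)
  have hyy : cfc (fun z => ((‖z - m₀‖ : ℝ) : ℂ)) a * cfc (fun z => ((‖z - m₀‖ : ℝ) : ℂ)) a
      = star (a - m₀ • 1) * (a - m₀ • 1) := by
    have hA : cfc (fun z => ((‖z - m₀‖ : ℝ) : ℂ)) a * cfc (fun z => ((‖z - m₀‖ : ℝ) : ℂ)) a
        = cfc (fun z : ℂ => ((‖z - m₀‖ : ℝ) : ℂ) * ((‖z - m₀‖ : ℝ) : ℂ)) a :=
      (cfc_mul _ _ a hc hc).symm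
    have hB : cfc (fun x : ℂ => star (x - m₀)) a * cfc (fun z : ℂ => z - m₀) a
        = cfc (fun x : ℂ => star (x - m₀) * (x - m₀)) a :=
      (cfc_mul _ _ a (by fun_prop) (by fun_prop)).symm
    rw [hb, ← cfc_star (fun z : ℂ => z - m₀) a, hA, hB]
    apply cfc_congr
    intro z hz
    simp only [Complex.star_def]
    rw [← Complex.ofReal_mul, ← sq, Complex.sq_norm,
      Complex.normSq_eq_conj_mul_self]
  exact CFC.sqrt_unique hyy hy

lemma cstarAbs_pow_cfc {a : A} (ha : IsStarNormal a) (m₀ : ℂ) (k : ℕ) :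
    cstarAbs (a - m₀ • 1) ^ k = cfc (fun z => ((‖z - m₀‖ ^ k : ℝ) : ℂ)) a := by
  rw [cstarAbs_cfc ha m₀, ← cfc_pow _ k a (by fun_prop)]
  apply cfc_congr
  intro z hz
  push_cast
  rfl

lemma cfc_affine {a : A} (ha : IsStarNormal a) (κ u v : ℂ) :
    cfc (fun z => κ + u * z + v * (starRingEnd ℂ) z) a
      = κ • (1:A) + u • a + v • star a := by
  have e1 : cfc (fun z : ℂ => u * z) a = u • a := by
    have : (fun z : ℂ => u * z) = fun z : ℂ => u • (id z) := by ext z; simp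
    rw [this, cfc_smul u (id : ℂ → ℂ) a, cfc_id ℂ a]
  have e2 : cfc (fun z : ℂ => v * (starRingEnd ℂ) z) a = v • star a := by
    have : (fun z : ℂ => v * (starRingEnd ℂ) z) = fun z : ℂ => v • star (id z) := by ext z; simp
    rw [this, cfc_smul v (fun z : ℂ => star (id z)) a, cfc_star (id : ℂ → ℂ) a, cfc_id ℂ a]
  rw [cfc_add a (fun z => κ + u * z) (fun z => v * (starRingEnd ℂ) z) (by fun_prop)
      ((continuous_const.mul Complex.continuous_conj).continuousOn),
    cfc_add a (fun _ => κ) (fun z => u * z) (by fun_prop) (by fun_prop),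
    cfc_const κ a, Algebra.algebraMap_eq_smul_one, e1, e2]

end CfcLemmas

section Scalar

noncomputable def qMax (k : ℕ) : ℝ :=
  sSup ((fun x : ℝ => x * (1 - x) ^ k + x ^ k * (1 - x)) '' Set.Icc 0 1)

lemma q_le_qMax (k : ℕ) {x : ℝ} (hx : x ∈ Set.Icc (0:ℝ) 1) :
    x * (1 - x) ^ k + x ^ k * (1 - x) ≤ qMax k := by
  apply le_csSup
  · exact IsCompact.bddAbove_image isCompact_Icc (Continuous.continuousOn (by continuity))
  · exact Set.mem_image_of_mem _ hx

lemma qMax_nonneg {k : ℕ} (hk : 1 ≤ k) : 0 ≤ qMax k := by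
  have := q_le_qMax k (x := 0) (by norm_num)
  simpa [zero_pow (by omega : k ≠ 0)] using this

lemma sq_rpow_halfk {y : ℝ} (hy : 0 ≤ y) (k : ℕ) : (y^2 : ℝ) ^ ((k:ℝ)/2) = y ^ k := by
  rw [← Real.rpow_natCast y 2, ← Real.rpow_mul hy,
    show ((2:ℕ):ℝ) * ((k:ℝ)/2) = (k:ℝ) by push_cast; ring, Real.rpow_natCast]

lemma norm_sub_sq_le (w m : ℂ) :
    ‖w - m‖^2 = ‖w‖^2 + ‖m‖^2 - 2 * ((starRingEnd ℂ) m * w).re := by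
  have h1 : ‖w - m‖^2 = Complex.normSq (w - m) := by
    rw [Complex.sq_norm]
  rw [h1, Complex.normSq_sub]
  rw [Complex.sq_norm, Complex.sq_norm]
  congr 2
  rw [mul_comm]

lemma scalar_key (k : ℕ) (hk : 1 ≤ k) (m : ℂ) (hm : ‖m‖ ≤ 1/2) :
    ∃ δ C' : ℝ, 0 ≤ δ ∧
      C' + δ * (1/4 - ‖m‖^2) ≤ qMax k ∧
      ∀ w : ℂ, ‖w‖ ≤ 1/2 →
        ‖w - m‖^k ≤ δ * (1/4 + ‖m‖^2 - 2 * ((starRingEnd ℂ) m * w).re) + C' := by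
  set t := ‖m‖ with htdef
  have ht0 : 0 ≤ t := norm_nonneg m
  -- common facts
  have hre : ∀ w : ℂ, ‖w‖ ≤ 1/2 → |((starRingEnd ℂ) m * w).re| ≤ t * (1/2) := by
    intro w hw
    calc |((starRingEnd ℂ) m * w).re| ≤ ‖(starRingEnd ℂ) m * w‖ := Complex.abs_re_le_norm _
      _ = t * ‖w‖ := by rw [norm_mul]; simp [htdef]
      _ ≤ t * (1/2) := by nlinarith
  have hwm2 : ∀ w : ℂ, ‖w‖ ≤ 1/2 →
      ‖w - m‖^2 ≤ 1/4 + t^2 - 2 * ((starRingEnd ℂ) m * w).re := by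
    intro w hw
    rw [norm_sub_sq_le]
    nlinarith [norm_nonneg w]
  rcases eq_or_lt_of_le hk with hk1 | hk2
  · -- k = 1
    refine ⟨1, 1/4 + t^2, zero_le_one, ?_, ?_⟩
    · have : (1:ℝ)/4 + t^2 + 1 * (1/4 - t^2) = 1/2 := by ring
      rw [this]
      have := q_le_qMax k (x := 1/2) (by norm_num)
      rw [← hk1] at this ⊢
      norm_num at this ⊢
      linarith
    · intro w hw
      have h2 := hwm2 w hw
      rw [← hk1, pow_one]
      nlinarith [norm_nonneg (w - m), sq_nonneg (‖w - m‖ - 1/2)]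
  · -- k ≥ 2
    rcases eq_or_lt_of_le ht0 with ht0' | htpos
    · -- t = 0, m = 0
      have hm0 : m = 0 := norm_eq_zero.1 (by rw [← htdef, ← ht0'])
      refine ⟨0, (1/2)^k, le_refl 0, ?_, ?_⟩
      · have hq := q_le_qMax k (x := 1/2) (by norm_num)
        have h2 : (1:ℝ) - 1/2 = 1/2 := by norm_num
        rw [h2] at hq
        have heq : (1/2:ℝ) * (1/2)^k + (1/2)^k * (1/2) = (1/2)^k := by ring
        rw [heq] at hq
        have hgoal : ((1:ℝ)/2)^k + 0 * (1/4 - t^2) = (1/2)^k := by ring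
        rw [hgoal]
        exact hq
      · intro w hw
        simp only [hm0, sub_zero, map_zero, zero_mul, zero_add, mul_zero, Complex.zero_re,
          sub_zero]
        exact pow_le_pow_left₀ (norm_nonneg w) hw k
    · -- t > 0
      set a0 : ℝ := 1/2 - t with ha0
      set b0 : ℝ := 1/2 + t with hb0
      have ha0nn : 0 ≤ a0 := by simp [ha0]; linarith
      have hb0nn : 0 ≤ b0 := by simp [hb0]; linarith
      have hb01 : b0 ≤ 1 := by simp [hb0]; linarith
      set δ : ℝ := (b0^k - a0^k)/(2*t) with hδdef
      set C' : ℝ := b0^k - δ * b0^2 with hC'def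
      have hδnn : 0 ≤ δ := by
        apply div_nonneg _ (by linarith)
        have := pow_le_pow_left₀ ha0nn (show a0 ≤ b0 by simp [ha0, hb0]; linarith) k
        linarith
      refine ⟨δ, C', hδnn, ?_, ?_⟩
      · have hbud : C' + δ * (1/4 - t^2) = b0 * a0^k + b0^k * a0 := by
          rw [hC'def, hδdef]
          field_simp
          ring
        rw [hbud]
        have := q_le_qMax k (x := b0) (Set.mem_Icc.2 ⟨hb0nn, hb01⟩)
        have h1ma : 1 - b0 = a0 := by rw [ha0, hb0]; ring
        rw [h1ma] at this
        linarith
      · intro w hw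
        set x : ℝ := 1/4 + t^2 - 2 * ((starRingEnd ℂ) m * w).re with hxdef
        have hrew := hre w hw
        have hxlb : a0^2 ≤ x := by rw [hxdef, ha0]; cases abs_le.1 hrew with | intro h1 h2 => nlinarith
        have hxub : x ≤ b0^2 := by rw [hxdef, hb0]; cases abs_le.1 hrew with | intro h1 h2 => nlinarith
        have hx0 : 0 ≤ x := le_trans (sq_nonneg a0) hxlb
        have hs2 : ‖w - m‖^2 ≤ x := hwm2 w hw
        -- step 1 : ‖w-m‖^k ≤ x^(k/2)
        have step1 : ‖w - m‖^k ≤ x ^ ((k:ℝ)/2) := by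
          have hsle : ‖w - m‖ ≤ Real.sqrt x := (Real.le_sqrt (norm_nonneg _) hx0).2 hs2
          calc ‖w - m‖^k ≤ (Real.sqrt x)^k := pow_le_pow_left₀ (norm_nonneg _) hsle k
            _ = x ^ ((k:ℝ)/2) := by
                rw [Real.sqrt_eq_rpow x, ← Real.rpow_natCast (x ^ ((1:ℝ)/2)) k,
                  ← Real.rpow_mul hx0, show (1:ℝ)/2 * (k:ℝ) = (k:ℝ)/2 by ring]
        -- step 2 : convexity
        have step2 : x ^ ((k:ℝ)/2) ≤ δ * x + C' := by
          have hd : b0^2 - a0^2 = 2*t := by rw [ha0, hb0]; ring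
          set θ : ℝ := (b0^2 - x)/(2*t) with hθdef
          have hθ0 : 0 ≤ θ := div_nonneg (by linarith) (by linarith)
          have hθ1 : θ ≤ 1 := by
            rw [hθdef, div_le_one (by linarith)]
            linarith
          have hcomb : θ * a0^2 + (1-θ) * b0^2 = x := by
            rw [hθdef]
            field_simp
            ring
          have hp1 : (1:ℝ) ≤ (k:ℝ)/2 := by
            have h2k : (2:ℝ) ≤ (k:ℝ) := by exact_mod_cast hk2
            linarith
          have hcvx := (convexOn_rpow hp1).2 (Set.mem_Ici.2 (sq_nonneg a0))
            (Set.mem_Ici.2 (sq_nonneg b0)) hθ0 (show (0:ℝ) ≤ 1 - θ by linarith)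
            (show θ + (1 - θ) = 1 by ring)
          simp only [smul_eq_mul] at hcvx
          rw [hcomb, sq_rpow_halfk ha0nn k, sq_rpow_halfk hb0nn k] at hcvx
          have h2t : (2*t) ≠ 0 := by positivity
          have hθmul : θ * (2*t) = b0^2 - x := by
            rw [hθdef]; field_simp
          have hδmul : δ * (2*t) = b0^k - a0^k := by
            rw [hδdef]; field_simp
          have hend : θ*(a0^k) + (1-θ)*(b0^k) = δ * x + C' := by
            have hend2 : (θ*(a0^k) + (1-θ)*(b0^k)) * (2*t) = (δ * x + (b0^k - δ * b0^2)) * (2*t) := by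
              linear_combination (a0^k - b0^k) * hθmul - (x - b0^2) * hδmul
            have := mul_right_cancel₀ h2t hend2
            rw [hC'def]
            exact this
          rw [← hend]
          exact hcvx
        exact le_trans step1 step2
end Scalar

section Key
variable {A : Type*} [CStarAlgebra A] [PartialOrder A] [StarOrderedRing A]

lemma key_bound {a : A} (ha : IsStarNormal a) {φ : A →ₗ[ℂ] ℂ} (hφ : IsState φ)
    (k : ℕ) (hk : 1 ≤ k) (c : ℂ) (R : ℝ) (hR0 : 0 < R) (hR : ‖a - c • 1‖ ≤ R) :
    (φ (cstarAbs (a - φ a • 1) ^ k)).re ≤ qMax k * (2*R)^k := by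
  have hone : (1:A) ≠ 0 := by
    intro h
    have := hφ.1
    rw [h, map_zero] at this
    exact zero_ne_one this
  haveI : Nontrivial A := ⟨⟨1, 0, hone⟩⟩
  have h2Rpos : (0:ℝ) < 2*R := by linarith
  have h2Rc : (2*(R:ℂ)) ≠ 0 := by
    intro h
    rw [show (2*(R:ℂ)) = (((2*R : ℝ)):ℂ) by push_cast; ring, Complex.ofReal_eq_zero] at h
    linarith
  have hnorm2R : ‖(2*(R:ℂ))‖ = 2*R := by
    rw [show (2*(R:ℂ)) = (((2*R : ℝ)):ℂ) by push_cast; ring, Complex.norm_real,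
      Real.norm_eq_abs, abs_of_pos h2Rpos]
  have hφac : ‖φ a - c‖ ≤ R := by
    have h1 : φ (a - c • 1) = φ a - c := by
      rw [map_sub, map_smul, hφ.1, smul_eq_mul, mul_one]
    have h2 := state_norm_le hφ (a - c • 1)
    rw [h1] at h2
    linarith
  set m : ℂ := (φ a - c) / (2*(R:ℂ)) with hmdef
  have hm : ‖m‖ ≤ 1/2 := by
    rw [hmdef, norm_div, hnorm2R, div_le_iff₀ h2Rpos]
    linarith
  obtain ⟨δ, C', hδ, hbud, hpt⟩ := scalar_key k hk m hm
  have hspec : ∀ z ∈ spectrum ℂ a, ‖z - c‖ ≤ R := by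
    intro z hz
    have hz' : z - c ∈ spectrum ℂ (a - c • 1) := by
      rw [show (c • (1:A)) = algebraMap ℂ A c from (Algebra.algebraMap_eq_smul_one c).symm,
        ← spectrum.sub_singleton_eq]
      exact Set.sub_mem_sub hz rfl
    exact le_trans (spectrum.norm_le_norm_of_mem hz') hR
  set d : ℝ := (2*R)^k * δ / (2*R) with hddef
  have hdr : (2*R)^k * δ * (1/(2*R)) = d := by
    rw [hddef]
    field_simp
  have hre3 : ∀ z : ℂ, ((starRingEnd ℂ) m * ((z - c)/(2*(R:ℂ)))).re
      = (1/(2*R)) * ((starRingEnd ℂ) m * (z - c)).re := by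
    intro z
    have hz1 : (starRingEnd ℂ) m * ((z - c)/(2*(R:ℂ)))
        = (((1/(2*R) : ℝ)) : ℂ) * ((starRingEnd ℂ) m * (z - c)) := by
      push_cast
      ring
    rw [hz1, Complex.re_ofReal_mul]
  set G : ℂ → ℝ := fun z => (2*R)^k * (δ * (1/4 + ‖m‖^2) + C')
      - 2 * d * ((starRingEnd ℂ) m * (z - c)).re - ‖z - φ a‖^k with hGdef
  have hGeq : ∀ z : ℂ, G z = (2*R)^k *
      (δ * (1/4 + ‖m‖^2 - 2*((starRingEnd ℂ) m * ((z - c)/(2*(R:ℂ)))).re) + C')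
      - ‖z - φ a‖^k := by
    intro z
    rw [hGdef, hre3 z]
    linear_combination (2*((starRingEnd ℂ) m * (z - c)).re) * hdr
  have hG0 : ∀ z ∈ spectrum ℂ a, 0 ≤ G z := by
    intro z hz
    rw [hGeq z]
    have hwn : ‖(z - c)/(2*(R:ℂ))‖ ≤ 1/2 := by
      rw [norm_div, hnorm2R, div_le_iff₀ h2Rpos]
      have := hspec z hz
      linarith
    have hp := hpt _ hwn
    have hsub : (z - c)/(2*(R:ℂ)) - m = (z - φ a)/(2*(R:ℂ)) := by
      rw [hmdef, div_sub_div_same]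
      ring_nf
    have hnn : ‖(z - c)/(2*(R:ℂ)) - m‖^k = ‖z - φ a‖^k / (2*R)^k := by
      rw [hsub, norm_div, hnorm2R, div_pow]
    rw [hnn] at hp
    have h3 := mul_le_mul_of_nonneg_left hp (le_of_lt (pow_pos h2Rpos k))
    rw [mul_div_cancel₀ _ (ne_of_gt (pow_pos h2Rpos k))] at h3
    simp only [sub_nonneg]
    exact h3
  have hGcont : ContinuousOn G (spectrum ℂ a) := by
    apply Continuous.continuousOn
    rw [hGdef]
    fun_prop
  have hopnn : (0:A) ≤ cfc (fun z => ((G z : ℝ) : ℂ)) a := cfc_realval_nonneg ha G hGcont hG0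
  set u : ℂ := -((d : ℝ) : ℂ) * (starRingEnd ℂ) m with hudef
  set v : ℂ := -((d : ℝ) : ℂ) * m with hvdef
  set κ : ℂ := (((2*R)^k * (δ * (1/4 + ‖m‖^2) + C') : ℝ) : ℂ) - u * c - v * (starRingEnd ℂ) c
    with hκdef
  have hre2 : ∀ X : ℂ, ((X.re : ℝ) : ℂ) = (X + (starRingEnd ℂ) X)/2 := by
    intro X
    rw [Complex.add_conj]
    push_cast
    ring
  have hd2R : ((d : ℝ) : ℂ) * (2*(R:ℂ)) = (2*(R:ℂ))^k * ((δ : ℝ) : ℂ) := by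
    have hr : d * (2*R) = (2*R)^k * δ := by
      rw [hddef]; field_simp
    have h := congrArg (Complex.ofReal) hr
    push_cast at h
    exact h
  have hdecomp : cfc (fun z => ((G z : ℝ) : ℂ)) a
      = (κ • (1:A) + u • a + v • star a) - cstarAbs (a - φ a • 1)^k := by
    rw [← cfc_affine ha κ u v, cstarAbs_pow_cfc ha (φ a) k,
      ← cfc_sub (fun z => κ + u * z + v * (starRingEnd ℂ) z)
        (fun z => ((‖z - φ a‖^k : ℝ) : ℂ)) a
        (((continuous_const.add (continuous_const.mul continuous_id)).add
          (continuous_const.mul Complex.continuous_conj)).continuousOn) (by fun_prop)]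
    apply cfc_congr
    intro z hz
    rw [hGdef]
    push_cast
    rw [hre2]
    rw [hκdef, hudef, hvdef]
    simp only [map_mul, map_sub, Complex.conj_conj, Complex.conj_ofReal]
    push_cast
    ring
  have h9 := state_nonneg hφ hopnn
  rw [hdecomp, map_sub, map_add, map_add, map_smul, map_smul, map_smul, hφ.1,
    state_star hφ] at h9
  rw [Complex.nonneg_iff] at h9
  have h10 : (φ (cstarAbs (a - φ a • 1)^k)).re
      ≤ ((κ • (1:ℂ) + u • φ a + v • (starRingEnd ℂ) (φ a))).re := by
    have := h9.1
    simp only [Complex.sub_re] at this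
    linarith
  have hm2R : φ a - c = (2*(R:ℂ)) * m := by
    rw [hmdef, mul_div_cancel₀ _ h2Rc]
  have hm2R' : (starRingEnd ℂ) (φ a) - (starRingEnd ℂ) c
      = (2*(R:ℂ)) * (starRingEnd ℂ) m := by
    rw [← map_sub, hm2R]
    simp [map_mul, map_ofNat, Complex.conj_ofReal]
  have hs : ((‖m‖^2 : ℝ) : ℂ) = (starRingEnd ℂ) m * m := by
    rw [Complex.sq_norm, Complex.normSq_eq_conj_mul_self]
  have hval : κ • (1:ℂ) + u • φ a + v • (starRingEnd ℂ) (φ a)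
      = (((2*R)^k * (C' + δ * (1/4 - ‖m‖^2)) : ℝ) : ℂ) := by
    push_cast at hs
    simp only [smul_eq_mul, mul_one]
    rw [hκdef, hudef, hvdef]
    push_cast
    linear_combination (-((d:ℝ):ℂ) * (starRingEnd ℂ) m) * hm2R
      + (-((d:ℝ):ℂ) * m) * hm2R'
      - (2*m*((starRingEnd ℂ) m)) * hd2R
      + (2*(2*(R:ℂ))^k*((δ:ℝ):ℂ)) * hs
  rw [hval] at h10
  rw [Complex.ofReal_re] at h10
  have hfin : (2*R)^k * (C' + δ * (1/4 - ‖m‖^2)) ≤ (2*R)^k * qMax k :=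
    mul_le_mul_of_nonneg_left hbud (le_of_lt (pow_pos h2Rpos k))
  rw [mul_comm ((2*R)^k) (qMax k)] at hfin
  linarith

end Key


/-- The `k`-th root of the maximal `k`-th central moment. -/
noncomputable def Delta {B : Type*} [CStarAlgebra B] [PartialOrder B] [StarOrderedRing B]
    (k : ℕ) (b : B) : ℝ :=
  sSup {r : ℝ | ∃ φ : B →ₗ[ℂ] ℂ, IsState φ ∧
    r = (φ (cstarAbs (b - φ b • (1 : B)) ^ k)).re ^ ((1 : ℝ) / k)}

/-- For a normal element `a` of a unital C*-algebra and `k ≥ 1`,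
`Δ_k(a) ≤ 2 ‖q_k‖_∞^{1/k} · min_{λ ∈ ℂ} ‖a - λ 1‖`. -/
theorem Delta_le_of_normal {A : Type*} [CStarAlgebra A] [PartialOrder A] [StarOrderedRing A]
    (a : A) (ha : IsStarNormal a) (k : ℕ) (hk : 1 ≤ k) :
    Delta k a
      ≤ 2 * (sSup ((fun x : ℝ => x * (1 - x) ^ k + x ^ k * (1 - x)) '' Set.Icc 0 1))
            ^ ((1 : ℝ) / k) * ⨅ l : ℂ, ‖a - l • (1 : A)‖ := by
  have hkR : (0:ℝ) < (k:ℝ) := by exact_mod_cast Nat.pos_of_ne_zero (by omega)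
  set r : ℝ := ⨅ l : ℂ, ‖a - l • (1:A)‖ with hrdef
  have hr0 : 0 ≤ r := Real.iInf_nonneg (fun l => norm_nonneg _)
  have hM0 : 0 ≤ qMax k := qMax_nonneg hk
  set Q : ℝ := 2 * (qMax k) ^ ((1:ℝ)/k) with hQdef
  have hQ0 : 0 ≤ Q := by
    rw [hQdef]
    exact mul_nonneg (by norm_num) (Real.rpow_nonneg hM0 _)
  have hgoal : Delta k a ≤ Q * r := by
    have hmain : ∀ ε : ℝ, 0 < ε → Delta k a ≤ Q * (r + ε) := by
      intro ε hε
      have hR0 : (0:ℝ) < r + ε := by linarith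
      obtain ⟨c, hc⟩ : ∃ l : ℂ, ‖a - l • (1:A)‖ < r + ε := by
        apply exists_lt_of_ciInf_lt
        rw [← hrdef]
        linarith
      unfold Delta
      apply Real.sSup_le
      · rintro x ⟨φ, hφ, hxe⟩
        have hkey := key_bound ha hφ k hk c (r + ε) hR0 (le_of_lt hc)
        have hpos : (0:A) ≤ cstarAbs (a - φ a • 1) ^ k := by
          rw [cstarAbs_pow_cfc ha (φ a) k]
          exact cfc_realval_nonneg ha _ (by fun_prop) (fun z _ => by positivity)
        have hre0 : 0 ≤ (φ (cstarAbs (a - φ a • 1) ^ k)).re :=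
          (Complex.nonneg_iff.1 (state_nonneg hφ hpos)).1
        rw [hxe]
        have h1 : (φ (cstarAbs (a - φ a • 1) ^ k)).re ^ ((1:ℝ)/k)
            ≤ (qMax k * (2*(r+ε))^k) ^ ((1:ℝ)/k) :=
          Real.rpow_le_rpow hre0 hkey (by positivity)
        have h2 : (qMax k * (2*(r+ε))^k) ^ ((1:ℝ)/k)
            = (qMax k) ^ ((1:ℝ)/k) * (2*(r+ε)) := by
          rw [Real.mul_rpow hM0 (by positivity), ← Real.rpow_natCast (2*(r+ε)) k,
            ← Real.rpow_mul (by positivity), mul_one_div, div_self (ne_of_gt hkR),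
            Real.rpow_one]
        rw [h2] at h1
        calc (φ (cstarAbs (a - φ a • 1) ^ k)).re ^ ((1:ℝ)/k)
            ≤ (qMax k) ^ ((1:ℝ)/k) * (2*(r+ε)) := h1
          _ = Q * (r + ε) := by rw [hQdef]; ring
      · exact mul_nonneg hQ0 (le_of_lt hR0)
    apply le_of_forall_pos_le_add
    intro ε' hε'
    have h := hmain (ε'/(Q+1)) (by positivity)
    have hfrac : Q * (ε'/(Q+1)) ≤ ε' := by
      rw [div_eq_mul_inv, ← mul_assoc]
      rw [mul_comm Q ε', mul_assoc]
      nth_rewrite 2 [show ε' = ε' * 1 by ring]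
      apply mul_le_mul_of_nonneg_left _ (le_of_lt hε')
      rw [← div_eq_mul_inv, div_le_one (by linarith)]
      linarith
    calc Delta k a ≤ Q * (r + ε'/(Q+1)) := h
      _ = Q * r + Q * (ε'/(Q+1)) := by ring
      _ ≤ Q * r + ε' := by linarith
  exact hgoal
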